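/- The elementary three-ququart hypergraph state |H₄⟩, defined by coefficients c_{ijk} = ω^{ijk} for i,j,k ∈ {0,1,2,3} where ω = e^{2πi/4} = i, is SLOCC-equivalent to the state |000⟩ + |111⟩ + |212⟩ + |221⟩ + |333⟩. -/

import Mathlib

/-!
Write `u = (0,1,0,1)`, `w = (0,1,0,-1)`, `v = (0,1,2,1)` and `δ₂` for the indicator of `2`.
For `a b c : Fin 4` one checks the five-term decomposition
`i^(abc) = 1 - v a * u b * u c - 2 * u a * (u b * δ₂ c + δ₂ b * u c) + i * w a * w b * w c`,
whose terms are the images of `|000⟩, |111⟩, |212⟩ + |221⟩, |333⟩`. Hence `|H₄⟩ = (B₁ ⊗ B₂ ⊗ B₂)`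
applied to the target state, where `B₁` has columns `𝟙, -v, u, i w` and `B₂` has columns
`𝟙, u, -2 δ₂, w`. Both are invertible, and their inverses give the SLOCC equivalence.
-/

/-- The elementary three-ququart hypergraph state `|H₄⟩`, with coefficients
`ω^{ijk}` where `ω = e^{2πi/4} = i`. -/
noncomputable def H4 : Fin 4 × Fin 4 × Fin 4 → ℂ :=
  fun x => Complex.I ^ ((x.1 : ℕ) * (x.2.1 : ℕ) * (x.2.2 : ℕ))

/-- The target state `|000⟩ + |111⟩ + |212⟩ + |221⟩ + |333⟩`. -/
noncomputable def targetH4 : Fin 4 × Fin 4 × Fin 4 → ℂ :=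
  fun x => if x = (0, 0, 0) ∨ x = (1, 1, 1) ∨ x = (2, 1, 2) ∨ x = (2, 2, 1) ∨ x = (3, 3, 3)
    then 1 else 0

open Matrix Kronecker

theorem Matrix.kronecker_kronecker_mulVec_apply {R ι₁ ι₂ ι₃ κ₁ κ₂ κ₃ : Type*} [CommSemiring R]
    [Fintype κ₁] [Fintype κ₂] [Fintype κ₃] (A₁ : Matrix ι₁ κ₁ R) (A₂ : Matrix ι₂ κ₂ R)
    (A₃ : Matrix ι₃ κ₃ R) (ψ : κ₁ × κ₂ × κ₃ → R) (i : ι₁) (j : ι₂) (k : ι₃) :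
    (A₁ ⊗ₖ (A₂ ⊗ₖ A₃) *ᵥ ψ) (i, j, k) =
      ∑ a, ∑ b, ∑ c, A₁ i a * A₂ j b * A₃ k c * ψ (a, b, c) := by
  simp only [mulVec, dotProduct, Fintype.sum_prod_type, kronecker_apply, mul_assoc]

theorem Matrix.eq_kronecker_inv_mulVec_of_eq_kronecker_mulVec {R n₁ n₂ n₃ : Type*} [CommRing R]
    [Fintype n₁] [Fintype n₂] [Fintype n₃] [DecidableEq n₁] [DecidableEq n₂] [DecidableEq n₃]
    {B₁ : Matrix n₁ n₁ R} {B₂ : Matrix n₂ n₂ R} {B₃ : Matrix n₃ n₃ R}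
    (h₁ : IsUnit B₁.det) (h₂ : IsUnit B₂.det) (h₃ : IsUnit B₃.det) {φ ψ : n₁ × n₂ × n₃ → R}
    (h : ψ = B₁ ⊗ₖ (B₂ ⊗ₖ B₃) *ᵥ φ) : φ = B₁⁻¹ ⊗ₖ (B₂⁻¹ ⊗ₖ B₃⁻¹) *ᵥ ψ := by
  rw [h, mulVec_mulVec, ← mul_kronecker_mul, ← mul_kronecker_mul, nonsing_inv_mul _ h₁,
    nonsing_inv_mul _ h₂, nonsing_inv_mul _ h₃, one_kronecker_one, one_kronecker_one, one_mulVec]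

theorem sum_mul_targetH4 (x y z : Fin 4 → ℂ) :
    ∑ a, ∑ b, ∑ c, x a * y b * z c * targetH4 (a, b, c) =
      x 0 * y 0 * z 0 + x 1 * y 1 * z 1 + x 2 * y 1 * z 2 + x 2 * y 2 * z 1 + x 3 * y 3 * z 3 := by
  simp [Fin.sum_univ_four, targetH4, add_assoc]

noncomputable def h4Basis₁ : Matrix (Fin 4) (Fin 4) ℂ :=
  !![1, 0, 0, 0; 1, -1, 1, Complex.I; 1, -2, 0, 0; 1, -1, 1, -Complex.I]

def h4Basis₂ : Matrix (Fin 4) (Fin 4) ℂ :=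
  !![1, 0, 0, 0; 1, 1, 0, 1; 1, 0, -2, 0; 1, 1, 0, -1]

theorem det_h4Basis₁ : h4Basis₁.det = -4 * Complex.I := by
  simp [h4Basis₁, det_succ_row_zero, Fin.sum_univ_succ]
  ring

theorem det_h4Basis₂ : h4Basis₂.det = 4 := by
  simp [h4Basis₂, det_succ_row_zero, Fin.sum_univ_succ]
  norm_num

theorem H4_eq_kronecker_mulVec_targetH4 :
    H4 = h4Basis₁ ⊗ₖ (h4Basis₂ ⊗ₖ h4Basis₂) *ᵥ targetH4 := by
  funext ⟨a, b, c⟩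
  rw [kronecker_kronecker_mulVec_apply, sum_mul_targetH4, H4]
  fin_cases a <;> fin_cases b <;> fin_cases c <;> simp [h4Basis₁, h4Basis₂] <;> norm_num

/-- `|H₄⟩` is SLOCC-equivalent to `|000⟩ + |111⟩ + |212⟩ + |221⟩ + |333⟩`. -/
theorem h4_slocc_equiv_target :
    ∃ A₁ A₂ A₃ : Matrix (Fin 4) (Fin 4) ℂ,
      IsUnit A₁ ∧ IsUnit A₂ ∧ IsUnit A₃ ∧
      ∀ i j k : Fin 4,
        targetH4 (i, j, k) =
          ∑ a : Fin 4, ∑ b : Fin 4, ∑ c : Fin 4,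
            A₁ i a * A₂ j b * A₃ k c * H4 (a, b, c) := by
  have h₁ : IsUnit h4Basis₁.det := by simp [det_h4Basis₁]
  have h₂ : IsUnit h4Basis₂.det := by simp [det_h4Basis₂]
  have hinv₂ : IsUnit h4Basis₂⁻¹ := (isUnit_iff_isUnit_det _).mpr (isUnit_nonsing_inv_det _ h₂)
  refine ⟨h4Basis₁⁻¹, h4Basis₂⁻¹, h4Basis₂⁻¹,
    (isUnit_iff_isUnit_det _).mpr (isUnit_nonsing_inv_det _ h₁), hinv₂, hinv₂, fun i j k => ?_⟩
  rw [← kronecker_kronecker_mulVec_apply,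
    ← eq_kronecker_inv_mulVec_of_eq_kronecker_mulVec h₁ h₂ h₂ H4_eq_kronecker_mulVec_targetH4]
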